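/- For every uncountable cardinal α, the theory SAPP is not α-categorical: there exist two models of SAPP, each of cardinality α, that are not isomorphic. -/
import Mathlib


open FirstOrder Language Structure BoundedFormula

/-- The relation symbols of the language `L`: a single binary relation `O`. -/
inductive PerpRel : ℕ → Type
  | o : PerpRel 2

/-- The first-order language with a single binary relation symbol `O`. -/
def L : Language := ⟨fun _ => Empty, PerpRel⟩
  deriving IsRelational

/-- The binary relation symbol `O` of `L`. -/
abbrev oSym : L.Relations 2 := .o

/-- `O(xᵢ, xⱼ)` as a bounded formula. -/
def oBF {n : ℕ} (i j : Fin n) : L.BoundedFormula Empty n :=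
  oSym.boundedFormula₂ (&i) (&j)

/-- Finite conjunction of a list of bounded formulas. -/
def andAll {n : ℕ} : List (L.BoundedFormula Empty n) → L.BoundedFormula Empty n
  | [] => ⊤
  | φ :: l => φ ⊓ andAll l

/-- λ₁ₙ : ∀y₁…∀yₙ∀s(O(s,y₁) ∧ … ∧ O(s,yₙ) → ∃t(t ≠ y₁ ∧ … ∧ t ≠ yₙ ∧ O(s,t))).
Variables: y₁,…,yₙ are de Bruijn indices 0,…,n-1, s is index n, t is index n+1. -/
def lam1 (n : ℕ) : L.Sentence :=
  ((andAll ((List.finRange n).map fun i => oBF (Fin.last n) i.castSucc)).imp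
    ((andAll ((List.finRange n).map fun i =>
        ∼((&(Fin.last (n + 1))) =' (&(i.castSucc.castSucc)))) ⊓
      oBF ((Fin.last n).castSucc) (Fin.last (n + 1))).ex)).alls

/-- λ₂ₙ : ∀y₁…∀yₙ∃s(¬O(s,y₁) ∧ … ∧ ¬O(s,yₙ)).
Variables: y₁,…,yₙ are de Bruijn indices 0,…,n-1, s is index n. -/
def lam2 (n : ℕ) : L.Sentence :=
  ((andAll ((List.finRange n).map fun i => ∼(oBF (Fin.last n) i.castSucc))).ex).alls

/-- λ₃ : ∀x ¬O(x,x). -/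
def lam3 : L.Sentence := (∼(oBF (0 : Fin 1) 0)).alls

/-- λ₄ : ∀x∀y(O(x,y) → O(y,x)). -/
def lam4 : L.Sentence := ((oBF (0 : Fin 2) 1).imp (oBF (1 : Fin 2) 0)).alls

/-- λ₅ : ∀x∃y O(x,y). -/
def lam5 : L.Sentence := ((oBF (0 : Fin 2) 1).ex).alls

/-- λ₆ : ∀x∀y∀z∀t(O(x,z) ∧ O(y,z) ∧ O(x,t) → O(y,t)). -/
def lam6 : L.Sentence :=
  ((oBF (0 : Fin 4) 2 ⊓ oBF (1 : Fin 4) 2 ⊓ oBF (0 : Fin 4) 3).imp (oBF (1 : Fin 4) 3)).alls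

/-- The theory SAPP. -/
def SAPP : L.Theory :=
  {φ | ∃ n, 1 ≤ n ∧ φ = lam1 n} ∪ {φ | ∃ n, 2 ≤ n ∧ φ = lam2 n} ∪ {lam3, lam4, lam5, lam6}

universe u

section AuxModel

variable (I K : Type u)

/-- Relation interpretation on `I × Bool × K`: related iff same `I`-component and
different `Bool`-component. -/
def pRel : ∀ {n}, L.Relations n → (Fin n → I × Bool × K) → Prop
  | _, .o, v => (v 0).1 = (v 1).1 ∧ (v 0).2.1 ≠ (v 1).2.1

/-- The structure on `I × Bool × K`. -/
def pStr : L.Structure (I × Bool × K) :=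
  ⟨fun f => f.elim, pRel I K⟩

attribute [local instance] pStr

@[simp] theorem pRel_o (v : Fin 2 → I × Bool × K) :
    RelMap oSym v ↔ (v 0).1 = (v 1).1 ∧ (v 0).2.1 ≠ (v 1).2.1 :=
  Iff.rfl

variable {I K}

@[simp] theorem realize_oBF {n : ℕ} (i j : Fin n) (v : Empty → I × Bool × K)
    (xs : Fin n → I × Bool × K) :
    (oBF i j).Realize v xs ↔ (xs i).1 = (xs j).1 ∧ (xs i).2.1 ≠ (xs j).2.1 := by
  simp [oBF]

@[simp] theorem realize_andAll {n : ℕ} (l : List (L.BoundedFormula Empty n))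
    (v : Empty → I × Bool × K) (xs : Fin n → I × Bool × K) :
    (andAll l).Realize v xs ↔ ∀ φ ∈ l, φ.Realize v xs := by
  induction l with
  | nil => simp [andAll]
  | cons φ l ih => simp [andAll, ih]

theorem bool_helper : ∀ a b c d : Bool, a ≠ c → b ≠ c → a ≠ d → b ≠ d := by decide

theorem pStr_model [Infinite I] [Infinite K] : (I × Bool × K) ⊨ SAPP := by
  rw [Theory.model_iff]
  intro φ hφ
  rcases hφ with (⟨n, -, rfl⟩ | ⟨n, -, rfl⟩) | hφ
  · -- lam1
    simp only [lam1, Sentence.Realize, BoundedFormula.realize_alls, BoundedFormula.realize_imp,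
      BoundedFormula.realize_ex, BoundedFormula.realize_inf, realize_andAll]
    intro xs _
    obtain ⟨k', hk'⟩ :=
      ((Set.finite_range fun i : Fin n => (xs i.castSucc).2.2).infinite_compl).nonempty
    refine ⟨((xs (Fin.last n)).1, !(xs (Fin.last n)).2.1, k'), ?_, ?_⟩
    · rintro φ hφ
      obtain ⟨i, -, rfl⟩ := List.mem_map.1 hφ
      simp only [BoundedFormula.realize_not, BoundedFormula.realize_bdEqual, Function.comp_apply,
        Term.realize_var, Sum.elim_inr, Fin.snoc_last, Fin.snoc_castSucc]
      intro h
      exact hk' ⟨i, congrArg (fun t => t.2.2) h.symm⟩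
    · simp
  · -- lam2
    simp only [lam2, Sentence.Realize, BoundedFormula.realize_alls, BoundedFormula.realize_ex,
      realize_andAll]
    intro xs
    obtain ⟨i', hi'⟩ := ((Set.finite_range fun i : Fin n => (xs i).1).infinite_compl).nonempty
    refine ⟨(i', true, Classical.arbitrary K), ?_⟩
    rintro φ hφ
    obtain ⟨i, -, rfl⟩ := List.mem_map.1 hφ
    simp only [BoundedFormula.realize_not, realize_oBF, Fin.snoc_last, Fin.snoc_castSucc]
    exact fun h => hi' ⟨i, h.1.symm⟩
  · rcases hφ with rfl | rfl | rfl | rfl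
    · -- lam3
      simp only [lam3, Sentence.Realize, BoundedFormula.realize_alls, BoundedFormula.realize_not,
        realize_oBF]
      exact fun xs h => h.2 rfl
    · -- lam4
      simp only [lam4, Sentence.Realize, BoundedFormula.realize_alls, BoundedFormula.realize_imp,
        realize_oBF]
      exact fun xs h => ⟨h.1.symm, fun e => h.2 e.symm⟩
    · -- lam5
      simp only [lam5, Sentence.Realize, BoundedFormula.realize_alls, BoundedFormula.realize_ex,
        realize_oBF]
      intro xs
      exact ⟨((xs 0).1, !(xs 0).2.1, Classical.arbitrary K), rfl, by simp [Fin.snoc]⟩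
    · -- lam6
      simp only [lam6, Sentence.Realize, BoundedFormula.realize_alls, BoundedFormula.realize_imp,
        BoundedFormula.realize_inf, realize_oBF]
      rintro xs ⟨⟨⟨hxz1, hxz2⟩, ⟨hyz1, hyz2⟩⟩, ⟨hxt1, hxt2⟩⟩
      exact ⟨hyz1.trans (hxz1.symm.trans hxt1),
        bool_helper _ _ _ _ hxz2 hyz2 hxt2⟩

end AuxModel

/-- for every uncountable cardinal α, SAPP is not α-categorical: there are two
models of SAPP of cardinality α that are not isomorphic. -/
theorem statement_18 (α : Cardinal.{u}) (hα : Cardinal.aleph0 < α) :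
    ∃ (M N : Type u) (iM : L.Structure M) (iN : L.Structure N),
      @Theory.Model L M iM SAPP ∧ @Theory.Model L N iN SAPP ∧
        Cardinal.mk M = α ∧ Cardinal.mk N = α ∧
        IsEmpty (@Language.Equiv L M N iM iN) := by
  haveI hout : Infinite α.out :=
    Cardinal.infinite_iff.mpr (by rw [Cardinal.mk_out]; exact hα.le)
  have h2 : (2 : Cardinal.{u}) ≤ α := le_trans (by exact_mod_cast (Cardinal.nat_lt_aleph0 2).le) hα.le
  letI iA : L.Structure (ULift.{u} ℕ × Bool × α.out) := pStr _ _
  letI iB : L.Structure (α.out × Bool × ULift.{u} ℕ) := pStr _ _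
  refine ⟨_, _, iA, iB, pStr_model, pStr_model, ?_, ?_, ?_⟩
  · simp only [Cardinal.mk_prod, Cardinal.lift_id, Cardinal.mk_out, Cardinal.mk_uLift,
      Cardinal.mk_nat, Cardinal.lift_aleph0, Cardinal.mk_bool, Cardinal.lift_two,
      Cardinal.lift_uzero]
    rw [Cardinal.mul_eq_right hα.le h2 two_ne_zero,
      Cardinal.mul_eq_right hα.le hα.le Cardinal.aleph0_ne_zero]
  · simp only [Cardinal.mk_prod, Cardinal.lift_id, Cardinal.mk_out, Cardinal.mk_uLift,
      Cardinal.mk_nat, Cardinal.lift_aleph0, Cardinal.mk_bool, Cardinal.lift_two,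
      Cardinal.lift_uzero]
    rw [Cardinal.mul_eq_right le_rfl (by exact_mod_cast (Cardinal.nat_lt_aleph0 2).le) two_ne_zero,
      Cardinal.mul_eq_left hα.le hα.le Cardinal.aleph0_ne_zero]
  · refine ⟨fun g => ?_⟩
    set s : ULift.{u} ℕ × Bool × α.out := (⟨0⟩, true, Classical.arbitrary α.out) with hs
    have key : ∀ t : ULift.{u} ℕ × Bool × α.out,
        RelMap (M := ULift.{u} ℕ × Bool × α.out) oSym ![s, t] →
          (g s).1 = (g t).1 ∧ (g s).2.1 ≠ (g t).2.1 := by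
      intro t hrel
      have h := (StrongHomClass.map_rel g oSym ![s, t]).mpr hrel
      exact h
    have hF : Function.Injective (fun k : α.out => (g (⟨0⟩, false, k)).2.2) := by
      intro k k' h
      have h1 := key (⟨0⟩, false, k) ⟨rfl, by simp [hs]⟩
      have h2 := key (⟨0⟩, false, k') ⟨rfl, by simp [hs]⟩
      have hb : ∀ a b c : Bool, c ≠ a → c ≠ b → a = b := by decide
      have heq : g (⟨0⟩, false, k) = g (⟨0⟩, false, k') :=
        Prod.ext (h1.1.symm.trans h2.1)
          (Prod.ext (hb _ _ _ h1.2 h2.2) h)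
      exact congrArg (fun t => t.2.2) (g.injective heq)
    have hle : α ≤ Cardinal.aleph0 := by
      have h := Cardinal.mk_le_of_injective hF
      rwa [Cardinal.mk_out, Cardinal.mk_uLift, Cardinal.mk_nat, Cardinal.lift_aleph0] at h
    exact absurd hle (not_le.mpr hα)
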